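/- arXiv:2503.15033 — 2 statements merged into one kernel-verified Lean document; each statement's English description precedes it below -/
import Mathlib

section
/- The explicit functions ξ(t) = √3·(e^{2t/√3} + 1)/(e^{2t/√3} − 1), L(t) = (1/√3)·(e^{2t/√3} + 1)/(e^{2t/√3} − 1), and R(t) = (2/√3)·e^{t/√3}/(e^{2t/√3} − 1), defined for t ∈ (0,∞), solve the SO(4)-invariant expander system and satisfy the boundary conditions at 0 with parameter α = 0. -/
open Set Filter

/-- The SO(4)-invariant expander system on `(0,∞)`:
`ξ' = 1 − 3L²`, `R' = −R·L`, `L' = 1 − ξ·L + 2R²`. -/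
def SO4System (ξ L R : ℝ → ℝ) : Prop :=
  ∀ t ∈ Ioi (0 : ℝ),
    HasDerivAt ξ (1 - 3 * (L t) ^ 2) t ∧
    HasDerivAt R (-(R t) * L t) t ∧
    HasDerivAt L (1 - ξ t * L t + 2 * (R t) ^ 2) t

/-- Boundary conditions at `0` with parameter `α` for the SO(4)-invariant
expander system: `ξ − 3/t`, `L − 1/t` and `R − 1/t` extend to `C¹` functions on
`[0,∞)` vanishing at `0` with derivatives `(1+2α)/3`, `(1−α)/9`, `(α−1)/18`. -/
def SO4BC (α : ℝ) (ξ L R : ℝ → ℝ) : Prop :=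
  (∃ g : ℝ → ℝ, ContDiffOn ℝ 1 g (Ici 0) ∧ (∀ t ∈ Ioi (0 : ℝ), g t = ξ t - 3 / t) ∧
      g 0 = 0 ∧ derivWithin g (Ici 0) 0 = (1 + 2 * α) / 3) ∧
  (∃ g : ℝ → ℝ, ContDiffOn ℝ 1 g (Ici 0) ∧ (∀ t ∈ Ioi (0 : ℝ), g t = L t - 1 / t) ∧
      g 0 = 0 ∧ derivWithin g (Ici 0) 0 = (1 - α) / 9) ∧
  (∃ g : ℝ → ℝ, ContDiffOn ℝ 1 g (Ici 0) ∧ (∀ t ∈ Ioi (0 : ℝ), g t = R t - 1 / t) ∧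
      g 0 = 0 ∧ derivWithin g (Ici 0) 0 = (α - 1) / 18)

/-- The explicit hyperbolic (`α = 0`) solution of the SO(4)-invariant expander
system. -/
noncomputable def ξH : ℝ → ℝ := fun t =>
  Real.sqrt 3 * (Real.exp (2 * t / Real.sqrt 3) + 1) / (Real.exp (2 * t / Real.sqrt 3) - 1)

noncomputable def LH : ℝ → ℝ := fun t =>
  (1 / Real.sqrt 3) *
    (Real.exp (2 * t / Real.sqrt 3) + 1) / (Real.exp (2 * t / Real.sqrt 3) - 1)

noncomputable def RH : ℝ → ℝ := fun t =>
  (2 / Real.sqrt 3) * Real.exp (t / Real.sqrt 3) / (Real.exp (2 * t / Real.sqrt 3) - 1)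

/-!
With `s = t / √3` one has `ξH = 3 LH`, `LH = coth s / √3` and `RH = csch s / √3`. Since
`coth' = 1 - coth²`, `csch' = -csch coth` and `coth² - csch² = 1`, the system reduces to
`L' = 1/3 - L²`, `R' = -R L` with `L² - R² = 1/3`.

At `t = 0` the Laurent expansions `coth s = 1/s + s/3 + O(s³)` and `csch s = 1/s - s/6 + O(s³)`
give `(L - 1/t)/t → 1/9` and `(R - 1/t)/t → -1/18`; the limits are computed by L'Hôpital's rule,
starting from `sinh s / s → 1`. The derivatives of `L - 1/t` and `R - 1/t` then have the same
limits, because the equations express them through `L² - 1/t²` and `R L - 1/t²`, whose limits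
are sums of the two slopes.
-/

open Topology Real

theorem tendsto_div_pow_succ_of_hasDerivAt {f f' : ℝ → ℝ} {c : ℝ} {n : ℕ}
    (hf : ∀ s, HasDerivAt f (f' s) s) (hf0 : f 0 = 0)
    (h : Tendsto (fun s => f' s / s ^ n) (𝓝[>] 0) (𝓝 c)) :
    Tendsto (fun s => f s / s ^ (n + 1)) (𝓝[>] 0) (𝓝 (c / (n + 1))) := by
  refine HasDerivAt.lhopital_zero_nhdsGT (.of_forall hf)
    (.of_forall fun s => hasDerivAt_pow (n + 1) s)
    (eventually_mem_nhdsWithin.mono fun s (hs : 0 < s) => by positivity) ?_ ?_ ?_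
  · simpa [hf0] using (hf 0).continuousAt.continuousWithinAt.tendsto (s := Ioi 0)
  · simpa using (continuous_pow (n + 1)).continuousWithinAt.tendsto (x := (0 : ℝ)) (s := Ioi 0)
  · refine (h.div_const (n + 1)).congr fun s => ?_
    rw [Nat.add_sub_cancel, div_div, mul_comm]
    push_cast
    rfl

theorem tendsto_sinh_div_self : Tendsto (fun s => sinh s / s) (𝓝[>] 0) (𝓝 1) := by
  have h := (hasDerivAt_sinh 0).tendsto_slope_zero_right
  simp only [zero_add, sinh_zero, sub_zero, cosh_zero, smul_eq_mul] at h
  exact h.congr fun s => inv_mul_eq_div _ _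

theorem tendsto_cosh_sub_one_div_sq :
    Tendsto (fun s => (cosh s - 1) / s ^ 2) (𝓝[>] 0) (𝓝 (1 / 2)) := by
  have := tendsto_div_pow_succ_of_hasDerivAt (n := 1) (fun s => (hasDerivAt_cosh s).sub_const 1)
    (by simp) (by simpa using tendsto_sinh_div_self)
  norm_num at this
  exact this

theorem tendsto_sinh_sub_self_div_cube :
    Tendsto (fun s => (sinh s - s) / s ^ 3) (𝓝[>] 0) (𝓝 (1 / 6)) := by
  have := tendsto_div_pow_succ_of_hasDerivAt (n := 2)
    (fun s => (hasDerivAt_sinh s).sub (hasDerivAt_id s)) (by simp) tendsto_cosh_sub_one_div_sq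
  norm_num at this
  exact this

theorem tendsto_mul_cosh_sub_sinh_div_cube :
    Tendsto (fun s => (s * cosh s - sinh s) / s ^ 3) (𝓝[>] 0) (𝓝 (1 / 3)) := by
  have := tendsto_div_pow_succ_of_hasDerivAt (n := 2) (f' := fun s => s * sinh s) (c := 1)
    (fun s => by simpa using ((hasDerivAt_id s).mul (hasDerivAt_cosh s)).sub (hasDerivAt_sinh s))
    (by simp) ?_
  · norm_num at this
    exact this
  · refine tendsto_sinh_div_self.congr fun s => ?_
    field_simp

theorem tendsto_coth_sub_inv_div :
    Tendsto (fun s => (cosh s / sinh s - 1 / s) / s) (𝓝[>] 0) (𝓝 (1 / 3)) := by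
  have h := tendsto_mul_cosh_sub_sinh_div_cube.div tendsto_sinh_div_self one_ne_zero
  rw [div_one] at h
  refine h.congr' (eventually_mem_nhdsWithin.mono fun s (hs : 0 < s) => ?_)
  have := sinh_pos_iff.mpr hs
  simp only [Pi.div_apply]
  field_simp

theorem tendsto_inv_sinh_sub_inv_div :
    Tendsto (fun s => ((sinh s)⁻¹ - 1 / s) / s) (𝓝[>] 0) (𝓝 (-1 / 6)) := by
  have h := tendsto_sinh_sub_self_div_cube.neg.div tendsto_sinh_div_self one_ne_zero
  rw [div_one, ← neg_div] at h
  refine h.congr' (eventually_mem_nhdsWithin.mono fun s (hs : 0 < s) => ?_)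
  have := sinh_pos_iff.mpr hs
  simp only [Pi.div_apply]
  field_simp
  ring

theorem tendsto_div_const_nhdsGT_zero {c : ℝ} (hc : 0 < c) :
    Tendsto (fun t => t / c) (𝓝[>] 0) (𝓝[>] 0) :=
  tendsto_nhdsWithin_iff.mpr
    ⟨by simpa using ((continuous_id.div_const c).tendsto 0).mono_left nhdsWithin_le_nhds,
      eventually_mem_nhdsWithin.mono fun t (ht : 0 < t) => div_pos ht hc⟩

theorem tendsto_mul_sub_inv_sq {f g : ℝ → ℝ} {a b : ℝ}
    (hf : Tendsto (fun t => (f t - 1 / t) / t) (𝓝[>] 0) (𝓝 a))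
    (hg : Tendsto (fun t => (g t - 1 / t) / t) (𝓝[>] 0) (𝓝 b)) :
    Tendsto (fun t => f t * g t - 1 / t ^ 2) (𝓝[>] 0) (𝓝 (a + b)) := by
  have ht : Tendsto (fun t : ℝ => t ^ 2) (𝓝[>] 0) (𝓝 0) := by
    simpa using (continuous_pow 2).continuousWithinAt.tendsto (x := (0 : ℝ)) (s := Ioi 0)
  have h := (hf.add hg).add (ht.mul (hf.mul hg))
  rw [zero_mul, add_zero] at h
  refine h.congr' (eventually_mem_nhdsWithin.mono fun t (ht : 0 < t) => ?_)
  field_simp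
  ring

theorem exists_contDiffOn_Ici_extension {f f' : ℝ → ℝ} {c : ℝ}
    (hf : ∀ t ∈ Ioi (0 : ℝ), HasDerivAt f (f' t) t) (hf' : ContinuousOn f' (Ioi 0))
    (hslope : Tendsto (fun t => f t / t) (𝓝[>] 0) (𝓝 c)) (hlim : Tendsto f' (𝓝[>] 0) (𝓝 c)) :
    ∃ g : ℝ → ℝ, ContDiffOn ℝ 1 g (Ici 0) ∧ (∀ t ∈ Ioi (0 : ℝ), g t = f t) ∧
      g 0 = 0 ∧ derivWithin g (Ici 0) 0 = c := by
  set g := Function.update f 0 0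
  set g' := Function.update f' 0 c
  have hgf : ∀ t ∈ Ioi (0 : ℝ), g t = f t := fun t ht => Function.update_of_ne ht.ne' _ _
  have hg'f' : ∀ t ∈ Ioi (0 : ℝ), g' t = f' t := fun t ht => Function.update_of_ne ht.ne' _ _
  have hg0 : g 0 = 0 := Function.update_self ..
  have hg'0 : g' 0 = c := Function.update_self ..
  have hg : ∀ t ∈ Ici (0 : ℝ), HasDerivWithinAt g (g' t) (Ici 0) t := by
    intro t ht
    rcases (mem_Ici.mp ht).eq_or_lt with rfl | ht
    · rw [hasDerivWithinAt_iff_tendsto_slope, Ici_sdiff_left, hg'0]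
      refine (hslope.congr' (eventually_mem_nhdsWithin.mono fun t ht => ?_))
      rw [slope_def_field, hg0, hgf t ht, sub_zero, sub_zero]
    · rw [hg'f' t ht]
      exact ((hf t ht).congr_of_eventuallyEq
        (eventually_of_mem (Ioi_mem_nhds ht) hgf)).hasDerivWithinAt
  have hderiv : EqOn (derivWithin g (Ici 0)) g' (Ici 0) := fun t ht =>
    (hg t ht).derivWithin (uniqueDiffOn_Ici 0 t ht)
  refine ⟨g, ?_, hgf, hg0, hg'0 ▸ hderiv self_mem_Ici⟩
  rw [contDiffOn_one_iff_derivWithin (uniqueDiffOn_Ici 0)]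
  refine ⟨fun t ht => (hg t ht).differentiableWithinAt, ContinuousOn.congr ?_ hderiv⟩
  intro t ht
  rcases (mem_Ici.mp ht).eq_or_lt with rfl | ht
  · rw [← continuousWithinAt_Ioi_iff_Ici, ContinuousWithinAt]
    exact hg'0 ▸ hlim.congr' (eventually_mem_nhdsWithin.mono fun t ht => (hg'f' t ht).symm)
  · exact ((hf' t ht).continuousAt (Ioi_mem_nhds ht)).congr
      (eventually_of_mem (Ioi_mem_nhds ht) fun u hu => (hg'f' u hu).symm) |>.continuousWithinAt

theorem cosh_div_sinh_eq (x : ℝ) :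
    cosh x / sinh x = (exp x * exp x + 1) / (exp x * exp x - 1) := by
  rw [cosh_eq, sinh_eq, div_div_div_cancel_right₀ two_ne_zero,
    ← mul_div_mul_left _ _ (exp_pos x).ne', exp_neg]
  field_simp

-- Valid also at `t = 0`, where both sides are `0` since `x / 0 = 0`.
theorem LH_eq (t : ℝ) : LH t = cosh (t / √3) / sinh (t / √3) / √3 := by
  rw [LH, cosh_div_sinh_eq, ← exp_add]
  ring_nf

theorem RH_eq (t : ℝ) : RH t = (sinh (t / √3))⁻¹ / √3 := by
  have hx := (exp_pos (t / √3)).ne'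
  have h2 : exp (2 * t / √3) = exp (t / √3) * exp (t / √3) := by rw [← exp_add]; ring_nf
  have hs : sinh (t / √3) = (exp (t / √3) * exp (t / √3) - 1) / (2 * exp (t / √3)) := by
    rw [sinh_eq, exp_neg]; field_simp
  rw [RH, h2, hs, inv_div]
  field_simp

theorem ξH_eq (t : ℝ) : ξH t = 3 * LH t := by
  rw [ξH, LH]
  field_simp
  norm_num

theorem hasDerivAt_LH {t : ℝ} (ht : t ≠ 0) : HasDerivAt LH (1 / 3 - LH t ^ 2) t := by
  have hs : sinh (t / √3) ≠ 0 := sinh_ne_zero.mpr (by positivity)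
  have hu : HasDerivAt (fun t => t / √3) (1 / √3) t := by
    simpa using (hasDerivAt_id t).div_const √3
  have h := (((hasDerivAt_cosh _).div (hasDerivAt_sinh _) hs).comp t hu).div_const √3
  rw [funext LH_eq]
  refine h.congr_deriv ?_
  have h3 : √3 ^ 2 = 3 := sq_sqrt (by norm_num)
  field_simp
  linear_combination (-sinh (t / √3) ^ 2) * h3

theorem hasDerivAt_RH {t : ℝ} (ht : t ≠ 0) : HasDerivAt RH (-RH t * LH t) t := by
  have hs : sinh (t / √3) ≠ 0 := sinh_ne_zero.mpr (by positivity)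
  have hu : HasDerivAt (fun t => t / √3) (1 / √3) t := by
    simpa using (hasDerivAt_id t).div_const √3
  have h := (((hasDerivAt_sinh _).inv hs).comp t hu).div_const √3
  rw [funext RH_eq]
  refine h.congr_deriv ?_
  rw [LH_eq]
  field_simp

theorem LH_sq_sub_RH_sq {t : ℝ} (ht : t ≠ 0) : LH t ^ 2 - RH t ^ 2 = 1 / 3 := by
  have hs : sinh (t / √3) ≠ 0 := sinh_ne_zero.mpr (by positivity)
  have h3 : √3 ^ 2 = 3 := sq_sqrt (by norm_num)
  rw [LH_eq, RH_eq]
  field_simp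
  linear_combination (-sinh (t / √3) ^ 2) * h3 + 3 * cosh_sq_sub_sinh_sq (t / √3)

theorem tendsto_LH_sub_inv_div :
    Tendsto (fun t => (LH t - 1 / t) / t) (𝓝[>] 0) (𝓝 (1 / 9)) := by
  have hs := tendsto_div_const_nhdsGT_zero (c := √3) (by positivity)
  have h := (tendsto_coth_sub_inv_div.comp hs).div_const 3
  rw [show (1 / 3 : ℝ) / 3 = 1 / 9 by norm_num] at h
  refine h.congr' (eventually_mem_nhdsWithin.mono fun t (ht : 0 < t) => ?_)
  have h3 : √3 ^ 2 = 3 := sq_sqrt (by norm_num)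
  simp only [LH_eq, Function.comp_apply]
  field_simp
  linear_combination (t * cosh (t / √3) - √3 * sinh (t / √3)) * h3

theorem tendsto_RH_sub_inv_div :
    Tendsto (fun t => (RH t - 1 / t) / t) (𝓝[>] 0) (𝓝 (-1 / 18)) := by
  have hs := tendsto_div_const_nhdsGT_zero (c := √3) (by positivity)
  have h := (tendsto_inv_sinh_sub_inv_div.comp hs).div_const 3
  rw [show (-1 / 6 : ℝ) / 3 = -1 / 18 by norm_num] at h
  refine h.congr' (eventually_mem_nhdsWithin.mono fun t (ht : 0 < t) => ?_)
  have h3 : √3 ^ 2 = 3 := sq_sqrt (by norm_num)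
  simp only [RH_eq, Function.comp_apply]
  field_simp
  linear_combination (t - √3 * sinh (t / √3)) * h3

theorem hasDerivAt_ξH {t : ℝ} (ht : t ≠ 0) : HasDerivAt ξH (1 - 3 * LH t ^ 2) t := by
  rw [funext ξH_eq]
  exact (hasDerivAt_LH ht).const_mul 3 |>.congr_deriv (by ring)

theorem so4System_hyperbolic : SO4System ξH LH RH := fun t ht =>
  ⟨hasDerivAt_ξH ht.ne', hasDerivAt_RH ht.ne', (hasDerivAt_LH ht.ne').congr_deriv <| by
    linear_combination (ξH_eq t) * LH t + 2 * LH_sq_sub_RH_sq ht.ne'⟩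

theorem continuousOn_LH : ContinuousOn LH (Ioi 0) := fun _ ht =>
  (hasDerivAt_LH (ne_of_gt ht)).continuousAt.continuousWithinAt

theorem continuousOn_RH : ContinuousOn RH (Ioi 0) := fun _ ht =>
  (hasDerivAt_RH (ne_of_gt ht)).continuousAt.continuousWithinAt

theorem hasDerivAt_one_div {t : ℝ} (ht : t ≠ 0) : HasDerivAt (fun t => 1 / t) (-1 / t ^ 2) t := by
  simpa [one_div, neg_div] using hasDerivAt_inv ht

theorem exists_extension_LH_sub_inv : ∃ g : ℝ → ℝ, ContDiffOn ℝ 1 g (Ici 0) ∧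
    (∀ t ∈ Ioi (0 : ℝ), g t = LH t - 1 / t) ∧ g 0 = 0 ∧ derivWithin g (Ici 0) 0 = 1 / 9 := by
  refine exists_contDiffOn_Ici_extension (f' := fun t => 1 / 3 - LH t ^ 2 + 1 / t ^ 2)
    (fun t ht => ((hasDerivAt_LH ht.ne').sub (hasDerivAt_one_div ht.ne')).congr_deriv (by ring))
    ?_ tendsto_LH_sub_inv_div ?_
  · exact (continuousOn_const.sub (continuousOn_LH.pow 2)).add
      (continuousOn_const.div (continuousOn_pow 2) fun t ht => pow_ne_zero 2 (ne_of_gt ht))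
  · have h :=
      (tendsto_mul_sub_inv_sq tendsto_LH_sub_inv_div tendsto_LH_sub_inv_div).const_sub (1 / 3)
    rw [show (1 / 3 - (1 / 9 + 1 / 9) : ℝ) = 1 / 9 by norm_num] at h
    exact h.congr fun t => by ring

theorem exists_extension_RH_sub_inv : ∃ g : ℝ → ℝ, ContDiffOn ℝ 1 g (Ici 0) ∧
    (∀ t ∈ Ioi (0 : ℝ), g t = RH t - 1 / t) ∧ g 0 = 0 ∧ derivWithin g (Ici 0) 0 = -1 / 18 := by
  refine exists_contDiffOn_Ici_extension (f' := fun t => -RH t * LH t + 1 / t ^ 2)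
    (fun t ht => ((hasDerivAt_RH ht.ne').sub (hasDerivAt_one_div ht.ne')).congr_deriv (by ring))
    ?_ tendsto_RH_sub_inv_div ?_
  · exact (continuousOn_RH.neg.mul continuousOn_LH).add
      (continuousOn_const.div (continuousOn_pow 2) fun t ht => pow_ne_zero 2 (ne_of_gt ht))
  · have h := (tendsto_mul_sub_inv_sq tendsto_RH_sub_inv_div tendsto_LH_sub_inv_div).neg
    rw [show (-(-1 / 18 + 1 / 9) : ℝ) = -1 / 18 by norm_num] at h
    exact h.congr fun t => by ring

theorem exists_extension_ξH_sub_inv : ∃ g : ℝ → ℝ, ContDiffOn ℝ 1 g (Ici 0) ∧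
    (∀ t ∈ Ioi (0 : ℝ), g t = ξH t - 3 / t) ∧ g 0 = 0 ∧ derivWithin g (Ici 0) 0 = 1 / 3 := by
  obtain ⟨g, hg, hgL, hg0, hg'⟩ := exists_extension_LH_sub_inv
  refine ⟨fun t => 3 * g t, contDiffOn_const.mul hg, fun t ht => ?_, by simp [hg0], ?_⟩
  · dsimp only
    rw [hgL t ht, ξH_eq]
    ring
  · rw [derivWithin_const_mul 3 (hg.differentiableOn one_ne_zero 0 self_mem_Ici), hg']
    norm_num

theorem explicit_hyperbolic_solution :
    SO4System ξH LH RH ∧ SO4BC 0 ξH LH RH := by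
  refine ⟨so4System_hyperbolic, ?_, ?_, ?_⟩
  · simpa using exists_extension_ξH_sub_inv
  · simpa using exists_extension_LH_sub_inv
  · simpa using exists_extension_RH_sub_inv
end

section
/- Let C ∈ ℝ with C ≠ 0, let I ⊆ ℝ be an interval, and let f : I → ℝ be a twice differentiable function with f(t) > 0 for all t ∈ I, satisfying −2·f''/f + C·(f')² − 4·(f')²/f² + 4/f² = 1 on I. Then the function t ↦ f⁴·(f')²·e^{−C·f²/2} − (e^{−C·f²/2}/C³)·(C²·f²·(f² − 4) + 4C·(f² − 2) + 8) is constant on I; equivalently, there exists D ∈ ℝ such that (f')² = (C²f²(f²−4) + 4C(f²−2) + 8)/(C³·f⁴) + D·f^{−4}·e^{C·f²/2} on I. -/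
open Set

/-!
Along a solution, `2 f f'' = C f² f'² − 4 f'² + 4 − f²`. With `E(x) = exp (−C x² / 2)` and
`P(x) = C² x² (x² − 4) + 4 C (x² − 2) + 8`, both `f⁴ f'² E(f)` and `E(f) P(f) / C³` then have
derivative `f³ f' (4 − f²) E(f)`; for the second term this is because `E P / C³` is an
antiderivative of `x³ (4 − x²) E(x)`. Their difference therefore has zero derivative on the
interval, and solving the resulting identity for `f'²` gives the second form with `D` equal to
the constant.
-/

def solitonPoly (C x : ℝ) : ℝ :=
  C ^ 2 * x ^ 2 * (x ^ 2 - 4) + 4 * C * (x ^ 2 - 2) + 8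

noncomputable def solitonFirstIntegral (C x y : ℝ) : ℝ :=
  x ^ 4 * y ^ 2 * Real.exp (-C * x ^ 2 / 2) - (Real.exp (-C * x ^ 2 / 2) / C ^ 3) * solitonPoly C x

theorem Set.OrdConnected.exists_eq_const_of_hasDerivWithinAt_zero {s : Set ℝ} {g : ℝ → ℝ}
    (hs : s.OrdConnected) (hg : ∀ x ∈ s, HasDerivWithinAt g 0 s x) :
    ∃ c, ∀ x ∈ s, g x = c := by
  rcases s.eq_empty_or_nonempty with rfl | ⟨x₀, hx₀⟩
  · exact ⟨0, fun x hx => hx.elim⟩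
  refine ⟨g x₀, fun x hx => ?_⟩
  have hle := hs.convex.norm_image_sub_le_of_norm_hasDerivWithin_le (C := 0) hg
    (fun _ _ => by rw [norm_zero]) hx₀ hx
  rw [zero_mul, norm_le_zero_iff, sub_eq_zero] at hle
  exact hle

theorem hasDerivAt_exp_mul_solitonPoly {C : ℝ} (hC : C ≠ 0) (x : ℝ) :
    HasDerivAt (fun x => Real.exp (-C * x ^ 2 / 2) / C ^ 3 * solitonPoly C x)
      (x ^ 3 * (4 - x ^ 2) * Real.exp (-C * x ^ 2 / 2)) x := by
  have hE : HasDerivAt (fun x => Real.exp (-C * x ^ 2 / 2))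
      (Real.exp (-C * x ^ 2 / 2) * (-C * x)) x := by
    refine (((hasDerivAt_pow 2 x).const_mul (-C)).div_const 2).exp.congr_deriv ?_
    ring
  have hP : HasDerivAt (solitonPoly C) (C ^ 2 * (4 * x ^ 3 - 8 * x) + 8 * C * x) x := by
    have hsq : HasDerivAt (fun x : ℝ => x ^ 2) (2 * x) x := by
      simpa using hasDerivAt_pow 2 x
    refine ((((hsq.const_mul (C ^ 2)).fun_mul (hsq.sub_const 4)).add
      ((hsq.sub_const 2).const_mul (4 * C))).add_const 8).congr_deriv ?_
    ring
  refine ((hE.div_const (C ^ 3)).mul hP).congr_deriv ?_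
  unfold solitonPoly
  field_simp
  ring

theorem hasDerivWithinAt_pow_four_mul_sq_mul_exp {C : ℝ} {f f' : ℝ → ℝ} {s : Set ℝ}
    {t a b : ℝ}
    (hf : HasDerivWithinAt f a s t) (hf' : HasDerivWithinAt f' b s t) :
    HasDerivWithinAt (fun t => f t ^ 4 * f' t ^ 2 * Real.exp (-C * f t ^ 2 / 2))
      (Real.exp (-C * f t ^ 2 / 2) *
        (4 * f t ^ 3 * a * f' t ^ 2 + 2 * f t ^ 4 * f' t * b - C * f t ^ 5 * a * f' t ^ 2)) s t := by
  have hE : HasDerivWithinAt (fun t => Real.exp (-C * f t ^ 2 / 2))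
      (Real.exp (-C * f t ^ 2 / 2) * (-C * f t * a)) s t := by
    refine (((hf.fun_pow 2).const_mul (-C)).div_const 2).exp.congr_deriv ?_
    push_cast
    ring
  refine (((hf.fun_pow 4).fun_mul (hf'.fun_pow 2)).fun_mul hE).congr_deriv ?_
  push_cast
  ring

theorem two_mul_mul_eq_of_soliton_ode {C x y z : ℝ} (hx : x ≠ 0)
    (h : -2 * z / x + C * y ^ 2 - 4 * y ^ 2 / x ^ 2 + 4 / x ^ 2 = 1) :
    2 * z * x = C * y ^ 2 * x ^ 2 - 4 * y ^ 2 + 4 - x ^ 2 := by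
  field_simp at h
  linear_combination -h

theorem sq_eq_of_solitonFirstIntegral_eq {C x y c : ℝ} (hC : C ≠ 0) (hx : x ≠ 0)
    (h : solitonFirstIntegral C x y = c) :
    y ^ 2 = solitonPoly C x / (C ^ 3 * x ^ 4) + c * x ^ (-4 : ℤ) * Real.exp (C * x ^ 2 / 2) := by
  have hexp : Real.exp (C * x ^ 2 / 2) = (Real.exp (-C * x ^ 2 / 2))⁻¹ := by
    rw [← Real.exp_neg]
    ring_nf
  rw [hexp, zpow_neg, zpow_ofNat, ← h]
  unfold solitonFirstIntegral
  field_simp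
  ring

/-- First integral of the U(2)-invariant Kähler soliton ODE for `C ≠ 0`:
`f⁴(f')²e^{−Cf²/2} − (e^{−Cf²/2}/C³)(C²f²(f²−4) + 4C(f²−2) + 8)` is constant;
equivalently `(f')² = (C²f²(f²−4) + 4C(f²−2) + 8)/(C³f⁴) + D·f⁻⁴·e^{Cf²/2}`
for some constant `D`. -/
theorem kahler_first_integral (C : ℝ) (hC : C ≠ 0) (I : Set ℝ) (hI : I.OrdConnected)
    (f f' f'' : ℝ → ℝ) (hf : ∀ t ∈ I, 0 < f t)
    (hf' : ∀ t ∈ I, HasDerivWithinAt f (f' t) I t)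
    (hf'' : ∀ t ∈ I, HasDerivWithinAt f' (f'' t) I t)
    (hODE : ∀ t ∈ I,
      -2 * f'' t / f t + C * (f' t) ^ 2 - 4 * (f' t) ^ 2 / (f t) ^ 2 + 4 / (f t) ^ 2 = 1) :
    (∃ c : ℝ, ∀ t ∈ I,
      (f t) ^ 4 * (f' t) ^ 2 * Real.exp (-C * (f t) ^ 2 / 2)
        - (Real.exp (-C * (f t) ^ 2 / 2) / C ^ 3)
            * (C ^ 2 * (f t) ^ 2 * ((f t) ^ 2 - 4) + 4 * C * ((f t) ^ 2 - 2) + 8) = c) ∧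
    (∃ D : ℝ, ∀ t ∈ I,
      (f' t) ^ 2 =
        (C ^ 2 * (f t) ^ 2 * ((f t) ^ 2 - 4) + 4 * C * ((f t) ^ 2 - 2) + 8)
            / (C ^ 3 * (f t) ^ 4)
          + D * (f t) ^ (-4 : ℤ) * Real.exp (C * (f t) ^ 2 / 2)) := by
  have hderiv : ∀ t ∈ I,
      HasDerivWithinAt (fun t => solitonFirstIntegral C (f t) (f' t)) 0 I t := by
    intro t ht
    have hrel := two_mul_mul_eq_of_soliton_ode (hf t ht).ne' (hODE t ht)
    have hP := (hasDerivAt_exp_mul_solitonPoly hC (f t)).comp_hasDerivWithinAt t (hf' t ht)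
    refine ((hasDerivWithinAt_pow_four_mul_sq_mul_exp (hf' t ht) (hf'' t ht)).sub hP).congr_deriv ?_
    linear_combination Real.exp (-C * f t ^ 2 / 2) * f t ^ 3 * f' t * hrel
  obtain ⟨c, hc⟩ := hI.exists_eq_const_of_hasDerivWithinAt_zero hderiv
  exact ⟨⟨c, hc⟩, c, fun t ht => sq_eq_of_solitonFirstIntegral_eq hC (hf t ht).ne' (hc t ht)⟩
end
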